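/- Define V(r) = 1/sinh²(r) − 1/r² for r > 0. Then V'(r) ≠ 0 for all r > 0, i.e., V attains no critical point on (0, ∞). -/

import Mathlib

/-!
`V'(r) = 2 / r³ - 2 cosh r / sinh³ r`, which vanishes only if `sinh³ r = r³ cosh r`. In fact
`r³ cosh r < sinh³ r` for `r > 0`: both sides vanish at `0`, and the derivative of the
difference, `3 cosh y (sinh² y - y²) - y³ sinh y`, is positive because
`sinh² y - y² > y⁴ / 3` (from `sinh y > y + y³ / 6`) and `sinh y < y cosh y`.
Each of these elementary bounds is in turn obtained by the same monotonicity argument.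
-/

open Real Set

lemma lt_of_hasDerivAt_pos {f f' : ℝ → ℝ} {a b : ℝ} (hab : a < b)
    (hf : ∀ x ∈ Icc a b, HasDerivAt f (f' x) x) (hf' : ∀ x ∈ Ioo a b, 0 < f' x) :
    f a < f b := by
  obtain ⟨c, hc, hslope⟩ := exists_hasDerivAt_eq_slope f f' hab
    (fun x hx => (hf x hx).continuousAt.continuousWithinAt)
    (fun x hx => hf x (Ioo_subset_Icc_self hx))
  have := hf' c hc
  rw [hslope, div_pos_iff_of_pos_right (sub_pos.2 hab), sub_pos] at this
  exact this

namespace Real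

lemma one_add_sq_div_two_lt_cosh {x : ℝ} (hx : x ≠ 0) : 1 + x ^ 2 / 2 < cosh x := by
  have key := lt_of_hasDerivAt_pos (f := fun y => cosh y - 1 - y ^ 2 / 2)
    (f' := fun y => sinh y - y) (abs_pos.2 hx)
    (fun y _ => (((hasDerivAt_cosh y).sub_const 1).sub
      ((hasDerivAt_pow 2 y).div_const 2)).congr_deriv (by ring))
    (fun y hy => sub_pos.2 (self_lt_sinh_iff.2 hy.1))
  rw [← cosh_abs, ← sq_abs]
  simp only [cosh_zero] at key
  linarith

lemma self_add_pow_three_div_six_lt_sinh {x : ℝ} (hx : 0 < x) : x + x ^ 3 / 6 < sinh x := by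
  have key := lt_of_hasDerivAt_pos (f := fun y => sinh y - y - y ^ 3 / 6)
    (f' := fun y => cosh y - 1 - y ^ 2 / 2) hx
    (fun y _ => (((hasDerivAt_sinh y).sub (hasDerivAt_id' y)).sub
      ((hasDerivAt_pow 3 y).div_const 6)).congr_deriv (by ring))
    (fun y hy => by linarith [one_add_sq_div_two_lt_cosh hy.1.ne'])
  simp only [sinh_zero] at key
  linarith

lemma sinh_lt_mul_cosh {x : ℝ} (hx : 0 < x) : sinh x < x * cosh x := by
  have key := lt_of_hasDerivAt_pos (f := fun y => y * cosh y - sinh y)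
    (f' := fun y => y * sinh y) hx
    (fun y _ => (((hasDerivAt_id' y).mul (hasDerivAt_cosh y)).sub
      (hasDerivAt_sinh y)).congr_deriv (by ring))
    (fun y hy => mul_pos hy.1 (sinh_pos_iff.2 hy.1))
  simp only [sinh_zero] at key
  linarith

lemma pow_three_mul_cosh_lt_sinh_pow_three {x : ℝ} (hx : 0 < x) :
    x ^ 3 * cosh x < sinh x ^ 3 := by
  have key := lt_of_hasDerivAt_pos (f := fun y => sinh y ^ 3 - y ^ 3 * cosh y)
    (f' := fun y => 3 * cosh y * (sinh y ^ 2 - y ^ 2) - y ^ 3 * sinh y) hx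
    (fun y _ => (((hasDerivAt_sinh y).pow 3).sub
      ((hasDerivAt_pow 3 y).mul (hasDerivAt_cosh y))).congr_deriv (by ring))
    (fun y ⟨hy, _⟩ => by
      have hsinh := self_add_pow_three_div_six_lt_sinh hy
      have hsq : y ^ 4 / 3 < sinh y ^ 2 - y ^ 2 := by nlinarith [pow_pos hy 3, pow_pos hy 6]
      have hc := cosh_pos y
      rw [sub_pos]
      calc y ^ 3 * sinh y < y ^ 3 * (y * cosh y) :=
            mul_lt_mul_of_pos_left (sinh_lt_mul_cosh hy) (pow_pos hy 3)
        _ = 3 * cosh y * (y ^ 4 / 3) := by ring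
        _ < 3 * cosh y * (sinh y ^ 2 - y ^ 2) := by gcongr)
  simp only [sinh_zero, cosh_zero] at key
  linarith

end Real

lemma hasDerivAt_inv_sinh_sq_sub_inv_sq {x : ℝ} (hx : x ≠ 0) :
    HasDerivAt (fun s : ℝ => 1 / sinh s ^ 2 - 1 / s ^ 2)
      (2 / x ^ 3 - 2 * cosh x / sinh x ^ 3) x := by
  have hs : sinh x ≠ 0 := sinh_ne_zero.2 hx
  simp only [one_div]
  exact ((((hasDerivAt_sinh x).pow 2).inv (pow_ne_zero 2 hs)).sub
    ((hasDerivAt_pow 2 x).inv (pow_ne_zero 2 hx))).congr_deriv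
    (by rw [Pi.pow_apply]; field_simp; ring)

/-- Define `V(r) = 1/sinh² r − 1/r²` for `r > 0`.  Then `V'(r) ≠ 0` for all
`r > 0`, i.e. `V` attains no critical point on `(0, ∞)`. -/
theorem stmt4 (r : ℝ) (hr : 0 < r) (d : ℝ)
    (hd : HasDerivAt (fun s : ℝ => 1 / Real.sinh s ^ 2 - 1 / s ^ 2) d r) :
    d ≠ 0 := by
  have hs : 0 < sinh r := sinh_pos_iff.2 hr
  rw [hd.unique (hasDerivAt_inv_sinh_sq_sub_inv_sq hr.ne'), sub_ne_zero, Ne,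
    div_eq_div_iff (by positivity) (by positivity)]
  intro h
  linarith [pow_three_mul_cosh_lt_sinh_pow_three hr]
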